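/- Let ρ and σ be positive semidefinite matrices commuting with each other and let A, B be positive semidefinite matrices with A ⪯ B that both commute with ρ (and A, B commute). Then F(AρA, σ) ≤ F(BρB, σ), where F(X,σ) = Tr[sqrt(sqrt(σ) X sqrt(σ))]. -/

import Mathlib

/-!
Because A, B and ρ pairwise commute, `BρB - AρA = ρ((B - A)(B + A))` is a product of commuting
positive operators, so `AρA ≤ BρB`. Conjugation by `√σ` preserves the Löwner order, the square
root is operator monotone (`psqrt` is the continuous functional calculus square root), and the
trace is a positive functional.
-/

open Matrix ComplexOrder

attribute [local instance] Classical.propDecidable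

/-- Square root of a positive semidefinite matrix (junk value `0` otherwise). -/
noncomputable def psqrt {d : ℕ} (X : Matrix (Fin d) (Fin d) ℂ) : Matrix (Fin d) (Fin d) ℂ :=
  if h : X.PosSemidef then
    (h.1.eigenvectorUnitary : Matrix (Fin d) (Fin d) ℂ) *
      diagonal ((↑) ∘ (√·) ∘ h.1.eigenvalues) * (star h.1.eigenvectorUnitary : Matrix (Fin d) (Fin d) ℂ)
  else 0

/-- Fidelity `F(X, σ) = Tr √(√σ X √σ)` of positive semidefinite matrices. -/
noncomputable def fid {d : ℕ} (X σ : Matrix (Fin d) (Fin d) ℂ) : ℝ :=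
  (psqrt (psqrt σ * X * psqrt σ)).trace.re

open scoped MatrixOrder Matrix.Norms.L2Operator

section CommutingConjugation

variable {A : Type*} [NonUnitalRing A] [PartialOrder A] [StarRing A] [StarOrderedRing A]
  [TopologicalSpace A] [Module ℝ A] [IsScalarTower ℝ A A] [SMulCommClass ℝ A A]
  [NonUnitalContinuousFunctionalCalculus ℝ A IsSelfAdjoint] [NonnegSpectrumClass ℝ A]

lemma Commute.mul_self_le_mul_self {a b : A} (ha : 0 ≤ a) (hab : a ≤ b) (h : Commute a b) :
    a * a ≤ b * b := by
  have hdiff : (b - a) * (b + a) = b * b - a * a := by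
    rw [sub_mul, mul_add, mul_add, h.eq]; abel
  rw [← sub_nonneg, ← hdiff]
  refine Commute.mul_nonneg (sub_nonneg.mpr hab) (add_nonneg (ha.trans hab) ha) ?_
  exact ((Commute.refl b).sub_left h).add_right (h.symm.sub_left (Commute.refl a))

lemma Commute.mul_mul_le_mul_mul {a b c : A} (hc : 0 ≤ c) (ha : 0 ≤ a) (hab : a ≤ b)
    (h : Commute a b) (hac : Commute a c) (hbc : Commute b c) : a * c * a ≤ b * c * b := by
  have hsq : a * a ≤ b * b := h.mul_self_le_mul_self ha hab
  rw [hac.eq, hbc.eq, mul_assoc, mul_assoc, ← sub_nonneg, ← mul_sub]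
  refine Commute.mul_nonneg hc (sub_nonneg.mpr hsq) ?_
  exact (hbc.symm.mul_right hbc.symm).sub_right (hac.symm.mul_right hac.symm)

end CommutingConjugation

lemma psqrt_eq_sqrt {d : ℕ} (X : Matrix (Fin d) (Fin d) ℂ) : psqrt X = CFC.sqrt X := by
  by_cases hX : X.PosSemidef
  · rw [psqrt, dif_pos hX, CFC.sqrt_eq_real_sqrt X hX.nonneg, cfcₙ_eq_cfc, hX.1.cfc_eq,
      IsHermitian.cfc, Unitary.conjStarAlgAut_apply]
    rfl
  · rw [psqrt, dif_neg hX, CFC.sqrt, cfcₙ_apply_of_not_predicate]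
    rwa [nonneg_iff_posSemidef]

lemma fid_eq {d : ℕ} (X σ : Matrix (Fin d) (Fin d) ℂ) :
    fid X σ = (CFC.sqrt (CFC.sqrt σ * X * CFC.sqrt σ)).trace.re := by
  simp only [fid, psqrt_eq_sqrt]

lemma Matrix.trace_re_mono {n : Type*} [Fintype n] {P Q : Matrix n n ℂ} (h : P ≤ Q) :
    P.trace.re ≤ Q.trace.re :=
  (Complex.le_def.mp ((tracePositiveLinearMap n ℂ ℂ).monotone h)).1

theorem fidelity_monotone_general {d : ℕ} (ρ σ A B : Matrix (Fin d) (Fin d) ℂ)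
    (hρ : ρ.PosSemidef) (hA : A.PosSemidef) (hAB : (B - A).PosSemidef)
    (hABcomm : A * B = B * A)
    (hAρ : A * ρ = ρ * A) (hBρ : B * ρ = ρ * B) :
    fid (A * ρ * A) σ ≤ fid (B * ρ * B) σ := by
  have hfilter : A * ρ * A ≤ B * ρ * B :=
    Commute.mul_mul_le_mul_mul hρ.nonneg hA.nonneg hAB hABcomm hAρ hBρ
  rw [fid_eq, fid_eq]
  exact trace_re_mono <| CFC.sqrt_le_sqrt _ _ <|
    conjugate_le_conjugate_of_nonneg hfilter (CFC.sqrt_nonneg σ)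

theorem fidelity_monotone {d : ℕ} (ρ σ A B : Matrix (Fin d) (Fin d) ℂ)
    (hρ : ρ.PosSemidef) (hσ : σ.PosSemidef) (hρσ : ρ * σ = σ * ρ)
    (hA : A.PosSemidef) (hB : B.PosSemidef) (hAB : (B - A).PosSemidef)
    (hABcomm : A * B = B * A)
    (hAρ : A * ρ = ρ * A) (hBρ : B * ρ = ρ * B) :
    fid (A * ρ * A) σ ≤ fid (B * ρ * B) σ :=
  fidelity_monotone_general ρ σ A B hρ hA hAB hABcomm hAρ hBρ
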